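/- Let n ≥ 1 and let M be a positive C² function on ℝⁿ. Let E ⊂ ℝⁿ be closed, t > 0, f ∈ L²(ℝⁿ,M) supported in E, and let u ∈ H¹(ℝⁿ,M) satisfy ∫ u v M dx + t ∫ ∇u·∇v M dx = ∫ f v M dx for all v ∈ H¹(ℝⁿ,M). Then for every nonnegative η ∈ C_c^∞(ℝⁿ) vanishing on E, one has ∫_{ℝⁿ} η(x)² |u(x)|² M(x) dx ≤ t ∫_{ℝⁿ} |u(x)|² |∇η(x)|² M(x) dx. -/

import Mathlib

open MeasureTheory Filter Real Set RealInnerProductSpace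

/-- Membership in the weighted Sobolev space `H¹(ℝⁿ, M)`: `f` is differentiable and both
`f` and its gradient are square integrable against the measure `M(x) dx`. -/
def MemH1 {n : ℕ} (M f : EuclideanSpace ℝ (Fin n) → ℝ) : Prop :=
  Differentiable ℝ f ∧ Integrable (fun x => f x ^ 2 * M x) ∧
    Integrable (fun x => ‖gradient f x‖ ^ 2 * M x)

/-- `u` is a weak solution of `(I + tL)u = f`, where `L = -Δ - ∇ ln M · ∇`. -/
def IsWeakSolution {n : ℕ} (M : EuclideanSpace ℝ (Fin n) → ℝ) (t : ℝ)
    (f u : EuclideanSpace ℝ (Fin n) → ℝ) : Prop :=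
  MemH1 M u ∧ ∀ v : EuclideanSpace ℝ (Fin n) → ℝ, MemH1 M v →
    (∫ x, u x * v x * M x) + t * (∫ x, ⟪gradient u x, gradient v x⟫ * M x)
      = ∫ x, f x * v x * M x

section Aux

open InnerProductSpace

variable {F : Type*} [NormedAddCommGroup F] [InnerProductSpace ℝ F] [CompleteSpace F]

lemma aux_gradient_mul {f g : F → ℝ} {x : F} (hf : DifferentiableAt ℝ f x)
    (hg : DifferentiableAt ℝ g x) :
    gradient (fun y => f y * g y) x = f x • gradient g x + g x • gradient f x := by
  unfold gradient
  rw [fderiv_fun_mul hf hg, map_add, _root_.map_smul, _root_.map_smul]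

lemma aux_measurable_gradient {n : ℕ} (f : EuclideanSpace ℝ (Fin n) → ℝ) :
    Measurable (gradient f) :=
  ((toDual ℝ _).symm.continuous.measurable).comp (measurable_fderiv ℝ f)

lemma aux_continuous_gradient {f : F → ℝ} (hf : ContDiff ℝ (⊤ : ℕ∞) f) : Continuous (gradient f) :=
  (toDual ℝ F).symm.continuous.comp (hf.continuous_fderiv (by simp))

end Aux

set_option maxHeartbeats 1000000 in
/-- Caccioppoli-type estimate: if `f` is supported in the closed set `E` and `u` solves
`(I + tL)u = f` weakly, then for every nonnegative smooth compactly supported `η`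
vanishing on `E`, `∫ η² u² M ≤ t ∫ u² |∇η|² M`. -/
theorem caccioppoli {n : ℕ} (hn : 1 ≤ n)
    (M : EuclideanSpace ℝ (Fin n) → ℝ)
    (hMpos : ∀ x, 0 < M x) (hMreg : ContDiff ℝ 2 M)
    (E : Set (EuclideanSpace ℝ (Fin n))) (hE : IsClosed E)
    (t : ℝ) (ht : 0 < t)
    (f : EuclideanSpace ℝ (Fin n) → ℝ)
    (hfmeas : AEStronglyMeasurable f volume)
    (hfL2 : Integrable (fun x => f x ^ 2 * M x))
    (hsupp : Function.support f ⊆ E)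
    (u : EuclideanSpace ℝ (Fin n) → ℝ) (hu : IsWeakSolution M t f u)
    (η : EuclideanSpace ℝ (Fin n) → ℝ)
    (hη : ContDiff ℝ (⊤ : ℕ∞) η) (hηc : HasCompactSupport η)
    (hηnonneg : ∀ x, 0 ≤ η x) (hηE : ∀ x ∈ E, η x = 0) :
    (∫ x, η x ^ 2 * u x ^ 2 * M x)
      ≤ t * ∫ x, u x ^ 2 * ‖gradient η x‖ ^ 2 * M x := by
  obtain ⟨⟨hudiff, huL2, hugL2⟩, hweak⟩ := hu
  set gu := gradient u with hgu_def
  set gη := gradient η with hgη_def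
  have hηdiff : Differentiable ℝ η := hη.differentiable (by simp)
  have hMc : Continuous M := hMreg.continuous
  have hgηc : Continuous gη := aux_continuous_gradient hη
  have hηcont : Continuous η := hη.continuous
  have hucont : Continuous u := hudiff.continuous
  -- test function
  set v : EuclideanSpace ℝ (Fin n) → ℝ := fun x => (η x * η x) * u x with hv_def
  have hvdiff : Differentiable ℝ v := (hηdiff.mul hηdiff).mul hudiff
  -- gradient of v
  have hgv : ∀ x, gradient v x = (η x * η x) • gu x + (2 * (η x * u x)) • gη x := by
    intro x
    have h1 : gradient v x = (η x * η x) • gu x + u x • gradient (fun y => η y * η y) x :=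
      aux_gradient_mul ((hηdiff x).mul (hηdiff x)) (hudiff x)
    have h2 : gradient (fun y => η y * η y) x = η x • gη x + η x • gη x :=
      aux_gradient_mul (hηdiff x) (hηdiff x)
    rw [h1, h2]
    module
  -- measurability facts
  have hgu_m : Measurable gu := aux_measurable_gradient u
  -- boundedness constants
  obtain ⟨C₁, hC₁⟩ := hηc.exists_bound_of_continuous hηcont
  have hη2c : HasCompactSupport (fun x => η x * η x) := hηc.mul_left
  have hbη2 : ∃ C, ∀ x, ‖η x * η x‖ ≤ C :=
    hη2c.exists_bound_of_continuous (hηcont.mul hηcont)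
  have hbη4 : ∃ C, ∀ x, ‖(η x * η x) ^ 2‖ ≤ C := by
    obtain ⟨C, hC⟩ := hbη2
    exact ⟨C ^ 2, fun x => by
      rw [norm_pow]; exact pow_le_pow_left₀ (norm_nonneg _) (hC x) 2⟩
  have hbgη2 : ∃ C, ∀ x, ‖‖gη x‖ ^ 2‖ ≤ C := by
    have : HasCompactSupport (fun x => ‖gη x‖ ^ 2) := by
      apply HasCompactSupport.intro (K := tsupport η) hηc
      intro x hxs
      rw [← Set.mem_compl_iff] at hxs
      have hη0 : gη x = 0 := by
        have : η =ᶠ[nhds x] (fun _ => 0) := by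
          have : IsOpen (tsupport η)ᶜ := (isClosed_tsupport η).isOpen_compl
          filter_upwards [this.mem_nhds hxs] with y hy
          exact image_eq_zero_of_notMem_tsupport hy
        rw [hgη_def, Filter.EventuallyEq.gradient_eq this]
        simp [gradient]
      simp [hη0]
    exact this.exists_bound_of_continuous ((hgηc.norm.pow 2))
  have hbηgη : ∃ C, ∀ x, ‖(2 * η x) ^ 2 * ‖gη x‖ ^ 2‖ ≤ C := by
    obtain ⟨C, hC⟩ := hbgη2
    refine ⟨(2 * C₁) ^ 2 * C, fun x => ?_⟩
    have h0 : |η x| ≤ C₁ := by simpa using hC₁ x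
    have h1 : ‖(2 * η x) ^ 2‖ ≤ (2 * C₁) ^ 2 := by
      rw [Real.norm_eq_abs, abs_pow, abs_mul, abs_two]
      nlinarith [abs_nonneg (η x)]
    calc ‖(2 * η x) ^ 2 * ‖gη x‖ ^ 2‖ = ‖(2 * η x) ^ 2‖ * ‖‖gη x‖ ^ 2‖ := norm_mul _ _
      _ ≤ (2 * C₁) ^ 2 * C := by
          apply mul_le_mul h1 (hC x) (norm_nonneg _)
          positivity
  -- integrability of the main pieces
  have hA_int : Integrable (fun x => (η x * η x) * (‖gu x‖ ^ 2 * M x)) :=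
    hugL2.bdd_mul (hηcont.mul hηcont).aestronglyMeasurable (Filter.Eventually.of_forall hbη2.choose_spec)
  have hC_int : Integrable (fun x => ‖gη x‖ ^ 2 * (u x ^ 2 * M x)) :=
    huL2.bdd_mul (hgηc.norm.pow 2).aestronglyMeasurable (Filter.Eventually.of_forall hbgη2.choose_spec)
  -- pointwise bound for the cross term
  have hcross_bound : ∀ x, |η x * u x * ⟪gu x, gη x⟫ * M x|
      ≤ (1 / 2) * ((η x * η x) * (‖gu x‖ ^ 2 * M x) + ‖gη x‖ ^ 2 * (u x ^ 2 * M x)) := by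
    intro x
    have hcs : |⟪gu x, gη x⟫| ≤ ‖gu x‖ * ‖gη x‖ := abs_real_inner_le_norm _ _
    have hM := (hMpos x).le
    have habs : |η x * u x * ⟪gu x, gη x⟫ * M x|
        = η x * |u x| * |⟪gu x, gη x⟫| * M x := by
      rw [abs_mul, abs_mul, abs_mul, abs_of_nonneg (hηnonneg x), abs_of_nonneg hM]
    rw [habs]
    have e1 : η x * |u x| * |⟪gu x, gη x⟫| * M x
        ≤ η x * |u x| * (‖gu x‖ * ‖gη x‖) * M x := by
      apply mul_le_mul_of_nonneg_right _ hM
      exact mul_le_mul_of_nonneg_left hcs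
        (mul_nonneg (hηnonneg x) (abs_nonneg (u x)))
    have e2 : η x * |u x| * (‖gu x‖ * ‖gη x‖) * M x
        ≤ (1 / 2) * ((η x * η x) * (‖gu x‖ ^ 2 * M x) + ‖gη x‖ ^ 2 * (|u x| ^ 2 * M x)) := by
      have h := mul_nonneg (sq_nonneg (η x * ‖gu x‖ - |u x| * ‖gη x‖)) hM
      nlinarith [h]
    rw [sq_abs] at e2
    linarith
  have hcross_meas : AEStronglyMeasurable
      (fun x => η x * u x * ⟪gu x, gη x⟫ * M x) volume := by
    apply AEStronglyMeasurable.mul _ hMc.aestronglyMeasurable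
    apply AEStronglyMeasurable.mul ((hηcont.mul hucont).aestronglyMeasurable)
    exact (hgu_m.inner hgηc.measurable).aestronglyMeasurable
  have hB_int : Integrable (fun x => η x * u x * ⟪gu x, gη x⟫ * M x) := by
    refine Integrable.mono ((hA_int.add hC_int).const_mul (1 / 2)) hcross_meas ?_
    filter_upwards with x
    rw [Real.norm_eq_abs]
    exact (hcross_bound x).trans (le_abs_self _)
  -- v is in H¹
  have hvH1 : MemH1 M v := by
    refine ⟨hvdiff, ?_, ?_⟩
    · have : (fun x => v x ^ 2 * M x) = fun x => (η x * η x) ^ 2 * (u x ^ 2 * M x) := by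
        funext x; simp only [hv_def]; ring
      rw [this]
      exact huL2.bdd_mul ((hηcont.mul hηcont).pow 2).aestronglyMeasurable (Filter.Eventually.of_forall hbη4.choose_spec)
    · have hvbd : ∀ x, ‖gradient v x‖ ^ 2 * M x ≤
          2 * ((η x * η x) ^ 2 * (‖gu x‖ ^ 2 * M x))
          + 2 * ((2 * η x) ^ 2 * ‖gη x‖ ^ 2 * (u x ^ 2 * M x)) := by
        intro x
        have hM := (hMpos x).le
        have h1 : ‖gradient v x‖ ≤ ‖(η x * η x) • gu x‖ + ‖(2 * (η x * u x)) • gη x‖ := by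
          rw [hgv x]; exact norm_add_le _ _
        have h2 : ‖(η x * η x) • gu x‖ = |η x * η x| * ‖gu x‖ := by
          rw [norm_smul, Real.norm_eq_abs]
        have h3 : ‖(2 * (η x * u x)) • gη x‖ = |2 * (η x * u x)| * ‖gη x‖ := by
          rw [norm_smul, Real.norm_eq_abs]
        rw [h2, h3] at h1
        have h4 : ‖gradient v x‖ ^ 2 ≤ 2 * (|η x * η x| * ‖gu x‖) ^ 2
            + 2 * (|2 * (η x * u x)| * ‖gη x‖) ^ 2 := by
          nlinarith [h1, norm_nonneg (gradient v x),
            mul_nonneg (abs_nonneg (η x * η x)) (norm_nonneg (gu x)),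
            mul_nonneg (abs_nonneg (2 * (η x * u x))) (norm_nonneg (gη x)),
            sq_nonneg (|η x * η x| * ‖gu x‖ - |2 * (η x * u x)| * ‖gη x‖)]
        have h5 : (|η x * η x| * ‖gu x‖) ^ 2 = (η x * η x) ^ 2 * ‖gu x‖ ^ 2 := by
          rw [mul_pow, sq_abs]
        have h6 : (|2 * (η x * u x)| * ‖gη x‖) ^ 2
            = (2 * η x) ^ 2 * ‖gη x‖ ^ 2 * u x ^ 2 := by
          rw [mul_pow, sq_abs]; ring
        rw [h5, h6] at h4
        have h7 := mul_le_mul_of_nonneg_right h4 hM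
        refine h7.trans (le_of_eq (by ring))
      have hint2 : Integrable (fun x =>
          2 * ((η x * η x) ^ 2 * (‖gu x‖ ^ 2 * M x))
          + 2 * ((2 * η x) ^ 2 * ‖gη x‖ ^ 2 * (u x ^ 2 * M x))) := by
        apply Integrable.add
        · exact (hugL2.bdd_mul ((hηcont.mul hηcont).pow 2).aestronglyMeasurable (Filter.Eventually.of_forall hbη4.choose_spec)).const_mul 2
        · exact (huL2.bdd_mul (((continuous_const.mul hηcont).pow 2).mul
            (hgηc.norm.pow 2)).aestronglyMeasurable (Filter.Eventually.of_forall hbηgη.choose_spec)).const_mul 2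
      refine Integrable.mono hint2 ?_ ?_
      · apply AEStronglyMeasurable.mul _ hMc.aestronglyMeasurable
        exact ((aux_measurable_gradient v).norm.pow_const 2).aestronglyMeasurable
      · filter_upwards with x
        rw [Real.norm_eq_abs, abs_of_nonneg (by
          have := (hMpos x).le
          positivity), Real.norm_eq_abs]
        refine (hvbd x).trans (le_abs_self _)
  -- the weak formulation with test function v
  have hkey := hweak v hvH1
  -- RHS is zero
  have hRHS : (∫ x, f x * v x * M x) = 0 := by
    have : ∀ x, f x * v x * M x = 0 := by
      intro x
      by_cases hfx : f x = 0
      · simp [hfx]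
      · have hxE : x ∈ E := hsupp hfx
        simp [hv_def, hηE x hxE]
    simp only [this, integral_zero]
  -- first integral
  have hI1 : (∫ x, u x * v x * M x) = ∫ x, η x ^ 2 * u x ^ 2 * M x := by
    apply integral_congr_ae
    filter_upwards with x
    simp only [hv_def]; ring
  -- second integral split
  have hI2 : (∫ x, ⟪gu x, gradient v x⟫ * M x)
      = (∫ x, (η x * η x) * (‖gu x‖ ^ 2 * M x))
        + 2 * ∫ x, η x * u x * ⟪gu x, gη x⟫ * M x := by
    have hpt : ∀ x, ⟪gu x, gradient v x⟫ * M x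
        = (η x * η x) * (‖gu x‖ ^ 2 * M x)
          + 2 * (η x * u x * ⟪gu x, gη x⟫ * M x) := by
      intro x
      rw [hgv x, inner_add_right, real_inner_smul_right, real_inner_smul_right,
        real_inner_self_eq_norm_sq]
      ring
    rw [integral_congr_ae (Filter.Eventually.of_forall hpt),
      integral_add hA_int (hB_int.const_mul 2), integral_const_mul]
  set L := ∫ x, η x ^ 2 * u x ^ 2 * M x with hL_def
  set A := ∫ x, (η x * η x) * (‖gu x‖ ^ 2 * M x) with hA_def
  set B := ∫ x, η x * u x * ⟪gu x, gη x⟫ * M x with hB_def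
  set C := ∫ x, u x ^ 2 * ‖gη x‖ ^ 2 * M x with hC_def
  have hCeq : C = ∫ x, ‖gη x‖ ^ 2 * (u x ^ 2 * M x) := by
    apply integral_congr_ae
    filter_upwards with x
    ring
  have hAnn : 0 ≤ A := by
    apply integral_nonneg
    intro x
    exact mul_nonneg (mul_nonneg (hηnonneg x) (hηnonneg x))
      (mul_nonneg (sq_nonneg _) (hMpos x).le)
  have hEq : L + t * (A + 2 * B) = 0 := by
    rw [hRHS, hI1, hI2] at hkey
    linarith [hkey]
  -- bound on |B|
  have hBabs : |B| ≤ (1 / 2) * (A + C) := by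
    calc |B| ≤ ∫ x, |η x * u x * ⟪gu x, gη x⟫ * M x| := by
          have h := norm_integral_le_integral_norm (μ := volume)
            (f := fun x => η x * u x * ⟪gu x, gη x⟫ * M x)
          simpa only [Real.norm_eq_abs] using h
      _ ≤ ∫ x, (1 / 2) * ((η x * η x) * (‖gu x‖ ^ 2 * M x) + ‖gη x‖ ^ 2 * (u x ^ 2 * M x)) := by
          apply integral_mono hB_int.abs ((hA_int.add hC_int).const_mul (1 / 2))
          exact hcross_bound
      _ = (1 / 2) * (A + C) := by
          rw [integral_const_mul, integral_add hA_int hC_int, hCeq]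
  have h2tB : -(2 * t * B) ≤ t * (A + C) := by
    have h1 : -B ≤ (1 / 2) * (A + C) := (neg_le_abs B).trans hBabs
    have := mul_le_mul_of_nonneg_left h1 ht.le
    nlinarith
  have htA : 0 ≤ t * A := mul_nonneg ht.le hAnn
  linarith
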